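/- For all quaternions p and q, the Laplacian in the variable q of the slice hyperholomorphic Fock kernel K_ℍ(q,p) = ∑_{k=0}^{∞} q^k (conj p)^k / k! (the series converges for all q, p) equals the Fock–Fueter kernel: Δ_q K_ℍ(q,p) = −2 ∑_{k=0}^{∞} (Q_k(q)/k!) (conj p)^{k+2}. -/

import Mathlib

open Quaternion

noncomputable section

/-- The imaginary unit `i` of the quaternions. -/
def qI : ℍ[ℝ] := ⟨0, 1, 0, 0⟩

/-- The imaginary unit `j` of the quaternions. -/
def qJ : ℍ[ℝ] := ⟨0, 0, 1, 0⟩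

/-- The imaginary unit `k` of the quaternions. -/
def qK : ℍ[ℝ] := ⟨0, 0, 0, 1⟩

/-- Directional (partial) derivative of `f : ℍ → ℍ` along the direction `v`, at `q`. -/
def dd (v : ℍ[ℝ]) (f : ℍ[ℝ] → ℍ[ℝ]) (q : ℍ[ℝ]) : ℍ[ℝ] := fderiv ℝ f q v

/-- The Cauchy–Fueter operator `∂f = ∂_{x₀}f + i ∂_{x₁}f + j ∂_{x₂}f + k ∂_{x₃}f`. -/
def CF (f : ℍ[ℝ] → ℍ[ℝ]) (q : ℍ[ℝ]) : ℍ[ℝ] :=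
  dd 1 f q + qI * dd qI f q + qJ * dd qJ f q + qK * dd qK f q

/-- The conjugate Cauchy–Fueter operator `∂̄f = ∂_{x₀}f − i ∂_{x₁}f − j ∂_{x₂}f − k ∂_{x₃}f`. -/
def CFbar (f : ℍ[ℝ] → ℍ[ℝ]) (q : ℍ[ℝ]) : ℍ[ℝ] :=
  dd 1 f q - qI * dd qI f q - qJ * dd qJ f q - qK * dd qK f q

/-- The Laplacian `Δf = ∂²_{x₀}f + ∂²_{x₁}f + ∂²_{x₂}f + ∂²_{x₃}f` on `ℍ ≅ ℝ⁴`. -/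
def lap (f : ℍ[ℝ] → ℍ[ℝ]) (q : ℍ[ℝ]) : ℍ[ℝ] :=
  dd 1 (dd 1 f) q + dd qI (dd qI f) q + dd qJ (dd qJ f) q + dd qK (dd qK f) q

/-- The coefficients `T^k_j = 2(k−j+1)/((k+1)(k+2))`. -/
def T (k j : ℕ) : ℝ := 2 * ((k : ℝ) - j + 1) / (((k : ℝ) + 1) * ((k : ℝ) + 2))

/-- The Fueter regular polynomials `Q_k(q) = ∑_{j=0}^k T^k_j q^{k−j} (conj q)^j`. -/
def Q (k : ℕ) (q : ℍ[ℝ]) : ℍ[ℝ] :=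
  ∑ j ∈ Finset.range (k + 1), ((T k j : ℝ) : ℍ[ℝ]) * (q ^ (k - j) * (star q) ^ j)

open Finset



theorem sigma_reindex {M : Type*} [AddCommMonoid M] (n : ℕ) (g : ℕ → ℕ → M) :
    ∑ i ∈ range n, ∑ a ∈ range i, g a (i - 1 - a)
      = ∑ a ∈ range (n - 1), ∑ b ∈ range (n - 1 - a), g a b := by
  rw [Finset.sum_sigma', Finset.sum_sigma']
  refine sum_nbij' (fun x => ⟨x.2, x.1 - 1 - x.2⟩) (fun x => ⟨x.1 + x.2 + 1, x.1⟩)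
    ?_ ?_ ?_ ?_ (fun _ _ => rfl)
  · rintro ⟨a, b⟩ hx
    simp only [mem_sigma, mem_range] at *; omega
  · rintro ⟨a, b⟩ hx
    simp only [mem_sigma, mem_range] at *; omega
  · rintro ⟨a, b⟩ hx
    simp only [mem_sigma, mem_range] at hx
    have h1 : b + (a - 1 - b) + 1 = a := by omega
    simp only [h1]
  · rintro ⟨a, b⟩ hx
    simp only [mem_sigma, mem_range] at hx
    have h1 : a + b + 1 - 1 - a = b := by omega
    simp only [h1]

theorem triangle_swap {M : Type*} [AddCommMonoid M] (n : ℕ) (h : ℕ → M) :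
    ∑ i ∈ range n, ∑ j ∈ range (n - i), h j = ∑ j ∈ range n, (n - j) • h j := by
  have e : ∀ j ∈ range n, (n - j) • h j = ∑ _i ∈ range (n - j), h j := by
    intro j _; rw [Finset.sum_const, card_range]
  rw [Finset.sum_congr rfl e, Finset.sum_sigma', Finset.sum_sigma']
  refine sum_nbij' (fun x => ⟨x.2, x.1⟩) (fun x => ⟨x.2, x.1⟩)
    ?_ ?_ (fun _ _ => rfl) (fun _ _ => rfl) (fun _ _ => rfl)
  · rintro ⟨a, b⟩ hx
    simp only [mem_sigma, mem_range] at *; omega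
  · rintro ⟨a, b⟩ hx
    simp only [mem_sigma, mem_range] at *; omega


def Afun (k : ℕ) (v w : ℍ[ℝ]) : ℍ[ℝ] := ∑ i ∈ range k, w ^ i * v * w ^ (k - 1 - i)

def Lpow (k : ℕ) (w : ℍ[ℝ]) : ℍ[ℝ] →L[ℝ] ℍ[ℝ] :=
  ∑ i ∈ range k, (ContinuousLinearMap.mul ℝ ℍ[ℝ] (w ^ i)).smulRight (w ^ (k - 1 - i))

theorem Lpow_apply (k : ℕ) (w v : ℍ[ℝ]) : Lpow k w v = Afun k v w := by
  simp [Lpow, Afun, ContinuousLinearMap.sum_apply, smul_eq_mul, mul_assoc]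

theorem Afun_succ (k : ℕ) (v w : ℍ[ℝ]) :
    Afun (k + 1) v w = w ^ k * v + Afun k v w * w := by
  simp only [Afun, Finset.sum_range_succ, Nat.add_sub_cancel, Nat.sub_self, pow_zero, mul_one,
    Finset.sum_mul]
  rw [add_comm]
  congr 1
  refine Finset.sum_congr rfl fun i hi => ?_
  have h : k - i = k - 1 - i + 1 := by have := Finset.mem_range.mp hi; omega
  rw [h, pow_succ, ← mul_assoc]

theorem hasFDerivAt_qpow (k : ℕ) (w : ℍ[ℝ]) :
    HasFDerivAt (fun y : ℍ[ℝ] => y ^ k) (Lpow k w) w := by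
  induction k with
  | zero =>
    simp only [pow_zero, Lpow, range_zero, Finset.sum_empty]
    exact hasFDerivAt_const 1 w
  | succ k ih =>
    have h := ih.mul' (hasFDerivAt_id w)
    simp only [id_eq] at h
    have e : ((fun y : ℍ[ℝ] => y ^ k) * id) = fun y => y ^ (k + 1) := by
      funext y; rw [pow_succ]; rfl
    rw [e] at h
    have eq : Lpow (k + 1) w = w ^ k • ContinuousLinearMap.id ℝ ℍ[ℝ] + MulOpposite.op w • Lpow k w := by
      refine ContinuousLinearMap.ext fun v => ?_
      simp only [Lpow_apply, ContinuousLinearMap.add_apply, ContinuousLinearMap.smul_apply,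
        ContinuousLinearMap.coe_id', id_eq, MulOpposite.smul_eq_mul_unop, MulOpposite.unop_op,
        smul_eq_mul, Afun_succ]
    rw [eq]
    exact h

def LAm (k : ℕ) (v w : ℍ[ℝ]) : ℍ[ℝ] →L[ℝ] ℍ[ℝ] :=
  ∑ i ∈ range k,
    ((w ^ i * v) • Lpow (k - 1 - i) w + ((Lpow i w).smulRight v).smulRight (w ^ (k - 1 - i)))

theorem LAm_apply (k : ℕ) (v w u : ℍ[ℝ]) :
    LAm k v w u = ∑ i ∈ range k,
      (w ^ i * v * Afun (k - 1 - i) u w + Afun i u w * v * w ^ (k - 1 - i)) := by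
  simp [LAm, ContinuousLinearMap.sum_apply, Lpow_apply, smul_eq_mul, mul_assoc]

theorem hasFDerivAt_Afun (k : ℕ) (v w : ℍ[ℝ]) :
    HasFDerivAt (fun y => Afun k v y) (LAm k v w) w := by
  simp only [Afun, LAm]
  apply HasFDerivAt.fun_sum
  intro i _
  exact ((hasFDerivAt_qpow i w).mul_const' v).mul' (hasFDerivAt_qpow (k - 1 - i) w)

theorem nat_le_two_pow (k : ℕ) : (k : ℝ) ≤ 2 ^ k := by
  exact_mod_cast Nat.le_of_lt (Nat.lt_two_pow_self (n := k))

theorem term_bound {R : ℝ} (hR : 1 ≤ R) {w : ℍ[ℝ]} (hw : ‖w‖ ≤ R) (v : ℍ[ℝ]) (i j k : ℕ)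
    (hij : i + j ≤ k) : ‖w ^ i * v * w ^ j‖ ≤ R ^ k * ‖v‖ := by
  have h0 : (0 : ℝ) ≤ R := zero_le_one.trans hR
  have e : ‖w ^ i * v * w ^ j‖ = ‖w‖ ^ i * ‖v‖ * ‖w‖ ^ j := by
    rw [norm_mul, norm_mul, norm_pow, norm_pow]
  rw [e]
  calc ‖w‖ ^ i * ‖v‖ * ‖w‖ ^ j ≤ R ^ i * ‖v‖ * R ^ j := by
        gcongr <;> exact norm_nonneg w
    _ = R ^ (i + j) * ‖v‖ := by rw [pow_add]; ring
    _ ≤ R ^ k * ‖v‖ := by gcongr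

theorem norm_Afun_le {R : ℝ} (hR : 1 ≤ R) {w : ℍ[ℝ]} (hw : ‖w‖ ≤ R) (k : ℕ) (v : ℍ[ℝ]) :
    ‖Afun k v w‖ ≤ 2 ^ k * R ^ k * ‖v‖ := by
  have h0 : (0 : ℝ) ≤ R := zero_le_one.trans hR
  calc ‖Afun k v w‖ ≤ ∑ i ∈ range k, ‖w ^ i * v * w ^ (k - 1 - i)‖ := norm_sum_le _ _
    _ ≤ ∑ _i ∈ range k, R ^ k * ‖v‖ := by
        refine Finset.sum_le_sum fun i hi => ?_
        exact term_bound hR hw v i (k - 1 - i) k (by have := Finset.mem_range.mp hi; omega)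
    _ = (k : ℝ) * (R ^ k * ‖v‖) := by rw [Finset.sum_const, card_range, nsmul_eq_mul]
    _ ≤ 2 ^ k * (R ^ k * ‖v‖) := by
        have := nat_le_two_pow k
        gcongr
    _ = 2 ^ k * R ^ k * ‖v‖ := by ring

theorem norm_LAm_apply_le {R : ℝ} (hR : 1 ≤ R) {w : ℍ[ℝ]} (hw : ‖w‖ ≤ R) (k : ℕ) (v u : ℍ[ℝ]) :
    ‖LAm k v w u‖ ≤ 2 * (4 ^ k * (R ^ k * R ^ k)) * (‖v‖ * ‖u‖) := by
  have h0 : (0 : ℝ) ≤ R := zero_le_one.trans hR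
  have hterm : ∀ i ∈ range k,
      ‖w ^ i * v * Afun (k - 1 - i) u w + Afun i u w * v * w ^ (k - 1 - i)‖
        ≤ 2 * (2 ^ k * (R ^ k * R ^ k)) * (‖v‖ * ‖u‖) := by
    intro i hi
    have hik := Finset.mem_range.mp hi
    have h1 : ‖w ^ i * v * Afun (k - 1 - i) u w‖ ≤ 2 ^ k * (R ^ k * R ^ k) * (‖v‖ * ‖u‖) := by
      calc ‖w ^ i * v * Afun (k - 1 - i) u w‖
          = ‖w‖ ^ i * ‖v‖ * ‖Afun (k - 1 - i) u w‖ := by rw [norm_mul, norm_mul, norm_pow]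
        _ ≤ R ^ k * ‖v‖ * (2 ^ k * R ^ k * ‖u‖) := by
            have ha := norm_Afun_le hR hw (k - 1 - i) u
            have hb : ‖Afun (k - 1 - i) u w‖ ≤ 2 ^ k * R ^ k * ‖u‖ := by
              refine ha.trans ?_
              gcongr
              all_goals first | omega | exact hR | norm_num
            have hwi : ‖w‖ ^ i ≤ R ^ k := by
              calc ‖w‖ ^ i ≤ R ^ i := by gcongr
                _ ≤ R ^ k := by
                  apply pow_le_pow_right₀ hR
                  omega
            gcongr
        _ = 2 ^ k * (R ^ k * R ^ k) * (‖v‖ * ‖u‖) := by ring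
    have h2 : ‖Afun i u w * v * w ^ (k - 1 - i)‖ ≤ 2 ^ k * (R ^ k * R ^ k) * (‖v‖ * ‖u‖) := by
      calc ‖Afun i u w * v * w ^ (k - 1 - i)‖
          = ‖Afun i u w‖ * ‖v‖ * ‖w‖ ^ (k - 1 - i) := by rw [norm_mul, norm_mul, norm_pow]
        _ ≤ 2 ^ k * R ^ k * ‖u‖ * ‖v‖ * R ^ k := by
            have ha := norm_Afun_le hR hw i u
            have hb : ‖Afun i u w‖ ≤ 2 ^ k * R ^ k * ‖u‖ := by
              refine ha.trans ?_
              gcongr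
              all_goals first | omega | exact hR | norm_num
            have hwi : ‖w‖ ^ (k - 1 - i) ≤ R ^ k := by
              calc ‖w‖ ^ (k - 1 - i) ≤ R ^ (k - 1 - i) := by gcongr
                _ ≤ R ^ k := by
                  apply pow_le_pow_right₀ hR
                  omega
            gcongr
        _ = 2 ^ k * (R ^ k * R ^ k) * (‖v‖ * ‖u‖) := by ring
    calc ‖_ + _‖ ≤ _ + _ := norm_add_le _ _
      _ ≤ 2 ^ k * (R ^ k * R ^ k) * (‖v‖ * ‖u‖) + 2 ^ k * (R ^ k * R ^ k) * (‖v‖ * ‖u‖) :=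
          add_le_add h1 h2
      _ = 2 * (2 ^ k * (R ^ k * R ^ k)) * (‖v‖ * ‖u‖) := by ring
  calc ‖LAm k v w u‖ ≤ ∑ i ∈ range k,
        ‖w ^ i * v * Afun (k - 1 - i) u w + Afun i u w * v * w ^ (k - 1 - i)‖ := by
        rw [LAm_apply]; exact norm_sum_le _ _
    _ ≤ ∑ _i ∈ range k, 2 * (2 ^ k * (R ^ k * R ^ k)) * (‖v‖ * ‖u‖) :=
        Finset.sum_le_sum hterm
    _ = (k : ℝ) * (2 * (2 ^ k * (R ^ k * R ^ k)) * (‖v‖ * ‖u‖)) := by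
        rw [Finset.sum_const, card_range, nsmul_eq_mul]
    _ ≤ 2 ^ k * (2 * (2 ^ k * (R ^ k * R ^ k)) * (‖v‖ * ‖u‖)) := by
        have := nat_le_two_pow k
        have hpos : (0:ℝ) ≤ 2 * (2 ^ k * (R ^ k * R ^ k)) * (‖v‖ * ‖u‖) := by positivity
        exact mul_le_mul_of_nonneg_right this hpos
    _ = 2 * (4 ^ k * (R ^ k * R ^ k)) * (‖v‖ * ‖u‖) := by
        rw [show (4:ℝ) ^ k = 2 ^ k * 2 ^ k by rw [← mul_pow]; norm_num]
        ring

/-- stage-1 term derivative -/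
def Kd (c : ℍ[ℝ]) (k : ℕ) (w : ℍ[ℝ]) : ℍ[ℝ] →L[ℝ] ℍ[ℝ] :=
  ((k.factorial : ℝ)⁻¹) • (Lpow k w).smulRight (c ^ k)

theorem Kd_apply (c : ℍ[ℝ]) (k : ℕ) (w v : ℍ[ℝ]) :
    Kd c k w v = ((k.factorial : ℝ)⁻¹) • (Afun k v w * c ^ k) := by
  simp [Kd, Lpow_apply, smul_eq_mul]

theorem hasFDerivAt_Kterm (c : ℍ[ℝ]) (k : ℕ) (w : ℍ[ℝ]) :
    HasFDerivAt (fun y => ((k.factorial : ℝ)⁻¹) • (y ^ k * c ^ k)) (Kd c k w) w :=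
  by
  have h := ((hasFDerivAt_qpow k w).mul_const' (c ^ k)).const_smul ((k.factorial : ℝ)⁻¹)
  have e : Kd c k w = ((k.factorial : ℝ)⁻¹) • MulOpposite.op (c ^ k) • Lpow k w := by
    exact ContinuousLinearMap.ext fun u => by simp [Kd, Lpow_apply, smul_eq_mul]
  rw [e]; exact h

theorem norm_Kd_le (c : ℍ[ℝ]) (k : ℕ) {R : ℝ} (hR : 1 ≤ R) {w : ℍ[ℝ]} (hw : ‖w‖ ≤ R) :
    ‖Kd c k w‖ ≤ (2 * (R * ‖c‖)) ^ k / k.factorial := by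
  have h0 : (0 : ℝ) ≤ R := zero_le_one.trans hR
  apply ContinuousLinearMap.opNorm_le_bound _ (by positivity)
  intro v
  rw [Kd_apply, norm_smul, Real.norm_eq_abs, abs_of_nonneg (by positivity), norm_mul, norm_pow]
  calc (k.factorial : ℝ)⁻¹ * (‖Afun k v w‖ * ‖c‖ ^ k)
      ≤ (k.factorial : ℝ)⁻¹ * ((2 ^ k * R ^ k * ‖v‖) * ‖c‖ ^ k) := by
        gcongr
        exact norm_Afun_le hR hw k v
    _ = (2 * (R * ‖c‖)) ^ k / k.factorial * ‖v‖ := by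
        rw [mul_pow, mul_pow]; field_simp


theorem summable_K (c w : ℍ[ℝ]) :
    Summable (fun k : ℕ => ((k.factorial : ℝ)⁻¹) • (w ^ k * c ^ k)) := by
  refine Summable.of_norm_bounded (g := fun k => (‖w‖ * ‖c‖) ^ k / k.factorial)
    (Real.summable_pow_div_factorial _) fun k => le_of_eq ?_
  show _ = (‖w‖ * ‖c‖) ^ k / (k.factorial : ℝ)
  rw [norm_smul, Real.norm_eq_abs, abs_of_nonneg (by positivity), norm_mul, norm_pow, norm_pow,
    mul_pow, div_eq_inv_mul]

theorem summable_Kd (c w : ℍ[ℝ]) {R : ℝ} (hR : 1 ≤ R) (hw : ‖w‖ ≤ R) :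
    Summable (fun k : ℕ => Kd c k w) :=
  Summable.of_norm_bounded (E := ℍ[ℝ] →L[ℝ] ℍ[ℝ]) (g := fun k => (2 * (R * ‖c‖)) ^ k / k.factorial)
    (Real.summable_pow_div_factorial _) fun k => norm_Kd_le c k hR hw

theorem hasFDerivAt_K (c w : ℍ[ℝ]) :
    HasFDerivAt (fun y : ℍ[ℝ] => ∑' k : ℕ, ((k.factorial : ℝ)⁻¹) • (y ^ k * c ^ k))
      (∑' k : ℕ, Kd c k w) w := by
  set R : ℝ := ‖w‖ + 1 with hRdef
  have hR : 1 ≤ R := by have := norm_nonneg w; simp only [hRdef]; linarith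
  have hRpos : 0 < R := lt_of_lt_of_le one_pos hR
  have hball : w ∈ Metric.ball (0 : ℍ[ℝ]) R := by
    rw [Metric.mem_ball, dist_zero_right]; simp only [hRdef]; linarith
  exact hasFDerivAt_tsum_of_isPreconnected
    (f := fun (k : ℕ) (y : ℍ[ℝ]) => ((k.factorial : ℝ)⁻¹) • (y ^ k * c ^ k))
    (f' := fun (k : ℕ) (x : ℍ[ℝ]) => Kd c k x)
    (u := fun k => (2 * (R * ‖c‖)) ^ k / k.factorial)
    (Real.summable_pow_div_factorial _)
    Metric.isOpen_ball (convex_ball (0 : ℍ[ℝ]) R).isPreconnected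
    (fun k x _ => hasFDerivAt_Kterm c k x)
    (fun k x hx => norm_Kd_le c k hR (le_of_lt (mem_ball_zero_iff.mp hx)))
    (Metric.mem_ball_self hRpos) (summable_K c 0) hball

theorem dd_K (c v w : ℍ[ℝ]) :
    dd v (fun y : ℍ[ℝ] => ∑' k : ℕ, ((k.factorial : ℝ)⁻¹) • (y ^ k * c ^ k)) w
      = ∑' k : ℕ, ((k.factorial : ℝ)⁻¹) • (Afun k v w * c ^ k) := by
  have h := hasFDerivAt_K c w
  rw [dd, h.fderiv]
  have hs : Summable fun k : ℕ => Kd c k w :=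
    summable_Kd c w (by linarith [norm_nonneg w] : (1:ℝ) ≤ ‖w‖ + 1)
      (by linarith [norm_nonneg w])
  rw [← ContinuousLinearMap.apply_apply (𝕜 := ℝ) (Fₗ := ℍ[ℝ]) v (∑' k : ℕ, Kd c k w),
    (ContinuousLinearMap.apply ℝ ℍ[ℝ] v).map_tsum hs]
  exact tsum_congr fun k => by rw [ContinuousLinearMap.apply_apply, Kd_apply]

/-- stage-2 term derivative -/
def Gd (c v : ℍ[ℝ]) (k : ℕ) (w : ℍ[ℝ]) : ℍ[ℝ] →L[ℝ] ℍ[ℝ] :=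
  ((k.factorial : ℝ)⁻¹) • (LAm k v w).smulRight (c ^ k)

theorem Gd_apply (c v : ℍ[ℝ]) (k : ℕ) (w u : ℍ[ℝ]) :
    Gd c v k w u = ((k.factorial : ℝ)⁻¹) • (LAm k v w u * c ^ k) := by
  simp [Gd, smul_eq_mul]

theorem hasFDerivAt_Gterm (c v : ℍ[ℝ]) (k : ℕ) (w : ℍ[ℝ]) :
    HasFDerivAt (fun y => ((k.factorial : ℝ)⁻¹) • (Afun k v y * c ^ k)) (Gd c v k w) w :=
  by
  have h := ((hasFDerivAt_Afun k v w).mul_const' (c ^ k)).const_smul ((k.factorial : ℝ)⁻¹)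
  have e : Gd c v k w = ((k.factorial : ℝ)⁻¹) • MulOpposite.op (c ^ k) • LAm k v w := by
    exact ContinuousLinearMap.ext fun u => by simp [Gd, smul_eq_mul]
  rw [e]; exact h

theorem norm_Gd_le (c v : ℍ[ℝ]) (k : ℕ) {R : ℝ} (hR : 1 ≤ R) {w : ℍ[ℝ]} (hw : ‖w‖ ≤ R) :
    ‖Gd c v k w‖ ≤ 2 * ‖v‖ * ((4 * (R * (R * ‖c‖))) ^ k / k.factorial) := by
  have h0 : (0 : ℝ) ≤ R := zero_le_one.trans hR
  apply ContinuousLinearMap.opNorm_le_bound _ (by positivity)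
  intro u
  rw [Gd_apply, norm_smul, Real.norm_eq_abs, abs_of_nonneg (by positivity), norm_mul, norm_pow]
  calc (k.factorial : ℝ)⁻¹ * (‖LAm k v w u‖ * ‖c‖ ^ k)
      ≤ (k.factorial : ℝ)⁻¹ * ((2 * (4 ^ k * (R ^ k * R ^ k)) * (‖v‖ * ‖u‖)) * ‖c‖ ^ k) := by
        gcongr
        exact norm_LAm_apply_le hR hw k v u
    _ = 2 * ‖v‖ * ((4 * (R * (R * ‖c‖))) ^ k / k.factorial) * ‖u‖ := by
        rw [mul_pow, mul_pow, mul_pow]; field_simp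

theorem summable_Aterm (c v w : ℍ[ℝ]) :
    Summable (fun k : ℕ => ((k.factorial : ℝ)⁻¹) • (Afun k v w * c ^ k)) := by
  set R : ℝ := ‖w‖ + 1 with hRdef
  have hR : 1 ≤ R := by have := norm_nonneg w; simp only [hRdef]; linarith
  have hw : ‖w‖ ≤ R := by simp only [hRdef]; linarith
  have h0 : (0 : ℝ) ≤ R := zero_le_one.trans hR
  refine Summable.of_norm_bounded (g := fun k => ‖v‖ * ((2 * (R * ‖c‖)) ^ k / k.factorial))
    ((Real.summable_pow_div_factorial _).mul_left _) fun k => ?_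
  rw [norm_smul, Real.norm_eq_abs, abs_of_nonneg (by positivity), norm_mul, norm_pow]
  calc (k.factorial : ℝ)⁻¹ * (‖Afun k v w‖ * ‖c‖ ^ k)
      ≤ (k.factorial : ℝ)⁻¹ * ((2 ^ k * R ^ k * ‖v‖) * ‖c‖ ^ k) := by
        gcongr
        exact norm_Afun_le hR hw k v
    _ = ‖v‖ * ((2 * (R * ‖c‖)) ^ k / k.factorial) := by
        rw [mul_pow, mul_pow]; field_simp

theorem summable_Gd (c v w : ℍ[ℝ]) {R : ℝ} (hR : 1 ≤ R) (hw : ‖w‖ ≤ R) :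
    Summable (fun k : ℕ => Gd c v k w) :=
  Summable.of_norm_bounded (E := ℍ[ℝ] →L[ℝ] ℍ[ℝ]) (g := fun k => 2 * ‖v‖ * ((4 * (R * (R * ‖c‖))) ^ k / k.factorial))
    (((Real.summable_pow_div_factorial _).mul_left _)) fun k => norm_Gd_le c v k hR hw

theorem hasFDerivAt_G (c v w : ℍ[ℝ]) :
    HasFDerivAt (fun y : ℍ[ℝ] => ∑' k : ℕ, ((k.factorial : ℝ)⁻¹) • (Afun k v y * c ^ k))
      (∑' k : ℕ, Gd c v k w) w := by
  set R : ℝ := ‖w‖ + 1 with hRdef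
  have hR : 1 ≤ R := by have := norm_nonneg w; simp only [hRdef]; linarith
  have hRpos : 0 < R := lt_of_lt_of_le one_pos hR
  have hball : w ∈ Metric.ball (0 : ℍ[ℝ]) R := by
    rw [Metric.mem_ball, dist_zero_right]; simp only [hRdef]; linarith
  exact hasFDerivAt_tsum_of_isPreconnected
    (f := fun (k : ℕ) (y : ℍ[ℝ]) => ((k.factorial : ℝ)⁻¹) • (Afun k v y * c ^ k))
    (f' := fun (k : ℕ) (x : ℍ[ℝ]) => Gd c v k x)
    (u := fun k => 2 * ‖v‖ * ((4 * (R * (R * ‖c‖))) ^ k / k.factorial))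
    ((Real.summable_pow_div_factorial _).mul_left _)
    Metric.isOpen_ball (convex_ball (0 : ℍ[ℝ]) R).isPreconnected
    (fun k x _ => hasFDerivAt_Gterm c v k x)
    (fun k x hx => norm_Gd_le c v k hR (le_of_lt (mem_ball_zero_iff.mp hx)))
    (Metric.mem_ball_self hRpos) (summable_Aterm c v 0) hball

theorem dd_dd_K (c v q : ℍ[ℝ]) :
    dd v (dd v (fun y : ℍ[ℝ] => ∑' k : ℕ, ((k.factorial : ℝ)⁻¹) • (y ^ k * c ^ k))) q
      = ∑' k : ℕ, ((k.factorial : ℝ)⁻¹) • (LAm k v q v * c ^ k) := by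
  have hfun : dd v (fun y : ℍ[ℝ] => ∑' k : ℕ, ((k.factorial : ℝ)⁻¹) • (y ^ k * c ^ k))
      = fun w => ∑' k : ℕ, ((k.factorial : ℝ)⁻¹) • (Afun k v w * c ^ k) :=
    funext fun w => dd_K c v w
  rw [hfun, dd, (hasFDerivAt_G c v q).fderiv]
  have hs : Summable fun k : ℕ => Gd c v k q :=
    summable_Gd c v q (by linarith [norm_nonneg q] : (1:ℝ) ≤ ‖q‖ + 1)
      (by linarith [norm_nonneg q])
  rw [← ContinuousLinearMap.apply_apply (𝕜 := ℝ) (Fₗ := ℍ[ℝ]) v (∑' k : ℕ, Gd c v k q),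
    (ContinuousLinearMap.apply ℝ ℍ[ℝ] v).map_tsum hs]
  exact tsum_congr fun k => by rw [ContinuousLinearMap.apply_apply, Gd_apply]

theorem summable_LAterm (c v q : ℍ[ℝ]) :
    Summable (fun k : ℕ => ((k.factorial : ℝ)⁻¹) • (LAm k v q v * c ^ k)) := by
  set R : ℝ := ‖q‖ + 1 with hRdef
  have hR : 1 ≤ R := by have := norm_nonneg q; simp only [hRdef]; linarith
  have hw : ‖q‖ ≤ R := by simp only [hRdef]; linarith
  have h0 : (0 : ℝ) ≤ R := zero_le_one.trans hR
  refine Summable.of_norm_bounded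
    (g := fun k => 2 * (‖v‖ * ‖v‖) * ((4 * (R * (R * ‖c‖))) ^ k / k.factorial))
    ((Real.summable_pow_div_factorial _).mul_left _) fun k => ?_
  rw [norm_smul, Real.norm_eq_abs, abs_of_nonneg (by positivity), norm_mul, norm_pow]
  calc (k.factorial : ℝ)⁻¹ * (‖LAm k v q v‖ * ‖c‖ ^ k)
      ≤ (k.factorial : ℝ)⁻¹ * ((2 * (4 ^ k * (R ^ k * R ^ k)) * (‖v‖ * ‖v‖)) * ‖c‖ ^ k) := by
        gcongr
        exact norm_LAm_apply_le hR hw k v v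
    _ = 2 * (‖v‖ * ‖v‖) * ((4 * (R * (R * ‖c‖))) ^ k / k.factorial) := by
        rw [mul_pow, mul_pow, mul_pow]; field_simp


theorem quat_vxv (y : ℍ[ℝ]) :
    1 * y * 1 + qI * y * qI + qJ * y * qJ + qK * y * qK = ((-2 : ℝ) : ℍ[ℝ]) * star y := by
  ext <;> simp [Quaternion.re_mul, Quaternion.imI_mul, Quaternion.imJ_mul, Quaternion.imK_mul] <;> simp [qI, qJ, qK] <;> ring

theorem comm_star (w : ℍ[ℝ]) : Commute w (star w) := by
  unfold Commute SemiconjBy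
  ext <;> simp <;> ring

/-- the diagonal of the second derivative bilinear form -/
theorem LAm_eval (k : ℕ) (v w : ℍ[ℝ]) :
    LAm k v w v = (∑ i ∈ range (k - 1), ∑ j ∈ range (k - 1 - i),
        w ^ i * v * w ^ j * v * w ^ (k - 2 - i - j))
      + (∑ i ∈ range (k - 1), ∑ j ∈ range (k - 1 - i),
        w ^ i * v * w ^ j * v * w ^ (k - 2 - i - j)) := by
  rw [LAm_apply, Finset.sum_add_distrib]
  congr 1
  · -- first part
    have e1 : ∀ i ∈ range k, w ^ i * v * Afun (k - 1 - i) v w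
        = ∑ j ∈ range (k - 1 - i), w ^ i * v * w ^ j * v * w ^ (k - 2 - i - j) := by
      intro i hi
      rw [Afun, Finset.mul_sum]
      refine Finset.sum_congr rfl fun j hj => ?_
      have hj' := Finset.mem_range.mp hj
      have he : k - 1 - i - 1 - j = k - 2 - i - j := by omega
      rw [he]
      simp only [mul_assoc]
    rw [Finset.sum_congr rfl e1]
    refine (Finset.sum_subset (Finset.range_subset_range.mpr (Nat.sub_le k 1))
      fun i hik hi => ?_).symm
    have : k - 1 - i = 0 := by
      have h1 := Finset.mem_range.mp hik
      have h2 : ¬ i < k - 1 := fun h => hi (Finset.mem_range.mpr h)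
      omega
    rw [this]
    simp
  · -- second part
    have e2 : ∀ i ∈ range k, Afun i v w * v * w ^ (k - 1 - i)
        = ∑ a ∈ range i,
            w ^ a * v * w ^ (i - 1 - a) * v * w ^ (k - 2 - a - (i - 1 - a)) := by
      intro i hi
      have hik := Finset.mem_range.mp hi
      rw [Afun, Finset.sum_mul, Finset.sum_mul]
      refine Finset.sum_congr rfl fun a ha => ?_
      have ha' := Finset.mem_range.mp ha
      have he : k - 2 - a - (i - 1 - a) = k - 1 - i := by omega
      rw [he]
    rw [Finset.sum_congr rfl e2]
    exact sigma_reindex k fun a b => w ^ a * v * w ^ b * v * w ^ (k - 2 - a - b)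

theorem sumv (k : ℕ) (w : ℍ[ℝ]) :
    LAm k 1 w 1 + LAm k qI w qI + LAm k qJ w qJ + LAm k qK w qK
      = (2 : ℕ) • ∑ j ∈ range (k - 1),
          (k - 1 - j) • (((-2 : ℝ) : ℍ[ℝ]) * (w ^ (k - 2 - j) * star w ^ j)) := by
  have key : ∀ v : ℍ[ℝ], LAm k v w v = (2:ℕ) • ∑ i ∈ range (k - 1), ∑ j ∈ range (k - 1 - i),
      w ^ i * v * w ^ j * v * w ^ (k - 2 - i - j) := by
    intro v; rw [LAm_eval, two_nsmul]
  rw [key, key, key, key]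
  rw [← nsmul_add, ← nsmul_add, ← nsmul_add]
  congr 1
  rw [← Finset.sum_add_distrib, ← Finset.sum_add_distrib, ← Finset.sum_add_distrib]
  rw [← triangle_swap (k - 1) (fun j => ((-2 : ℝ) : ℍ[ℝ]) * (w ^ (k - 2 - j) * star w ^ j))]
  refine Finset.sum_congr rfl fun i hi => ?_
  rw [← Finset.sum_add_distrib, ← Finset.sum_add_distrib, ← Finset.sum_add_distrib]
  refine Finset.sum_congr rfl fun j hj => ?_
  have hi' := Finset.mem_range.mp hi
  have hj' := Finset.mem_range.mp hj
  have e1 : w ^ i * 1 * w ^ j * 1 * w ^ (k - 2 - i - j)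
      + w ^ i * qI * w ^ j * qI * w ^ (k - 2 - i - j)
      + w ^ i * qJ * w ^ j * qJ * w ^ (k - 2 - i - j)
      + w ^ i * qK * w ^ j * qK * w ^ (k - 2 - i - j)
      = w ^ i * (1 * w ^ j * 1 + qI * w ^ j * qI + qJ * w ^ j * qJ + qK * w ^ j * qK)
          * w ^ (k - 2 - i - j) := by
    simp only [mul_add, add_mul, mul_assoc]
  rw [e1, quat_vxv, star_pow]
  rw [Quaternion.coe_mul_eq_smul, Quaternion.coe_mul_eq_smul, mul_smul_comm, smul_mul_assoc]
  congr 1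
  rw [mul_assoc, ((comm_star w).symm.pow_pow j (k - 2 - i - j)).eq, ← mul_assoc, ← pow_add,
    show i + (k - 2 - i - j) = k - 2 - j from by omega]

theorem coefkey (m j : ℕ) (hj : j ≤ m) :
    (((m + 2).factorial : ℝ))⁻¹ * (2 * ((m + 1 - j : ℕ) : ℝ) * (-2))
      = (-2) * ((m.factorial : ℝ)⁻¹ * T m j) := by
  have h1 : ((m + 1 - j : ℕ) : ℝ) = (m : ℝ) - j + 1 := by
    rw [Nat.cast_sub (by omega : j ≤ m + 1)]
    push_cast
    ring
  rw [h1, T]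
  rw [show (m + 2).factorial = (m + 2) * ((m + 1) * m.factorial) by
    rw [Nat.factorial_succ, Nat.factorial_succ]]
  have hf : (m.factorial : ℝ) ≠ 0 := Nat.cast_ne_zero.mpr m.factorial_ne_zero
  have h2 : ((m : ℝ) + 1) ≠ 0 := by positivity
  have h3 : ((m : ℝ) + 2) ≠ 0 := by positivity
  push_cast
  field_simp

theorem Skey (c q : ℍ[ℝ]) (m : ℕ) :
    (((m + 2).factorial : ℝ)⁻¹) • (((2 : ℕ) • ∑ j ∈ Finset.range (m + 2 - 1),
        (m + 2 - 1 - j) • (((-2 : ℝ) : ℍ[ℝ]) * (q ^ (m + 2 - 2 - j) * star q ^ j))) * c ^ (m + 2))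
      = -2 * (((m.factorial : ℝ)⁻¹) • (Q m q * c ^ (m + 2))) := by
  have e0 : m + 2 - 1 = m + 1 := rfl
  rw [e0, Q]
  rw [show ((-2 : ℍ[ℝ]) = ((-2 : ℝ) : ℍ[ℝ])) from by norm_cast]
  rw [Finset.smul_sum, Finset.sum_mul, Finset.smul_sum, Finset.sum_mul, Finset.smul_sum,
    Finset.mul_sum]
  refine Finset.sum_congr rfl fun j hj => ?_
  have hjm : j ≤ m := by have := Finset.mem_range.mp hj; omega
  have e1 : m + 2 - 2 - j = m - j := rfl
  have e2 : m + 1 - j = m + 1 - j := rfl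
  rw [e1]
  rw [Quaternion.coe_mul_eq_smul, Quaternion.coe_mul_eq_smul, Quaternion.coe_mul_eq_smul]
  rw [← Nat.cast_smul_eq_nsmul ℝ (m + 1 - j), ← Nat.cast_smul_eq_nsmul ℝ 2]
  rw [smul_mul_assoc, smul_mul_assoc, smul_mul_assoc, smul_mul_assoc]
  rw [smul_smul, smul_smul, smul_smul, smul_smul, smul_smul]
  rw [mul_assoc]
  congr 1
  rw [show ((2:ℕ):ℝ) = 2 from by norm_num]
  linear_combination coefkey m j hjm

/-- The slice hyperholomorphic Fock kernel series converges for all `q, p`, and its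
Laplacian in `q` is the Fock–Fueter kernel:
`Δ_q K_ℍ(q,p) = −2 ∑_{k} (Q_k(q)/k!) (conj p)^{k+2}`. -/
theorem laplacian_fock_kernel (q p : ℍ[ℝ]) :
    (∀ w : ℍ[ℝ], Summable (fun k : ℕ => ((k.factorial : ℝ)⁻¹) • (w ^ k * (star p) ^ k))) ∧
    lap (fun w => ∑' k : ℕ, ((k.factorial : ℝ)⁻¹) • (w ^ k * (star p) ^ k)) q =
      (-2 : ℍ[ℝ]) * ∑' k : ℕ, ((k.factorial : ℝ)⁻¹) • (Q k q * (star p) ^ (k + 2)) := by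
  refine ⟨fun w => summable_K (star p) w, ?_⟩
  have h1 := summable_LAterm (star p) 1 q
  have h2 := summable_LAterm (star p) qI q
  have h3 := summable_LAterm (star p) qJ q
  have h4 := summable_LAterm (star p) qK q
  rw [lap, dd_dd_K, dd_dd_K, dd_dd_K, dd_dd_K,
    ← Summable.tsum_add h1 h2, ← Summable.tsum_add (h1.add h2) h3, ← Summable.tsum_add ((h1.add h2).add h3) h4]
  have hS : (fun k : ℕ =>
      ((((k.factorial : ℝ)⁻¹) • (LAm k 1 q 1 * (star p) ^ k)
        + ((k.factorial : ℝ)⁻¹) • (LAm k qI q qI * (star p) ^ k))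
        + ((k.factorial : ℝ)⁻¹) • (LAm k qJ q qJ * (star p) ^ k))
        + ((k.factorial : ℝ)⁻¹) • (LAm k qK q qK * (star p) ^ k))
      = fun k : ℕ => ((k.factorial : ℝ)⁻¹) • (((2 : ℕ) • ∑ j ∈ Finset.range (k - 1),
          (k - 1 - j) • (((-2 : ℝ) : ℍ[ℝ]) * (q ^ (k - 2 - j) * star q ^ j))) * (star p) ^ k) := by
    funext k
    rw [← smul_add, ← smul_add, ← smul_add, ← add_mul, ← add_mul, ← add_mul, sumv]
  rw [hS]
  have hSsum : Summable (fun k : ℕ => ((k.factorial : ℝ)⁻¹) •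
      (((2 : ℕ) • ∑ j ∈ Finset.range (k - 1),
        (k - 1 - j) • (((-2 : ℝ) : ℍ[ℝ]) * (q ^ (k - 2 - j) * star q ^ j))) * (star p) ^ k)) := by
    rw [← hS]
    exact ((h1.add h2).add h3).add h4
  rw [Summable.tsum_eq_zero_add hSsum]
  rw [Summable.tsum_eq_zero_add ((summable_nat_add_iff 1).mpr hSsum)]
  rw [show (Finset.range (0 - 1)) = ∅ from rfl]
  simp only [Finset.sum_empty, smul_zero, zero_mul, zero_add]
  calc (∑' k : ℕ, (((k + 1 + 1).factorial : ℝ)⁻¹) • (((2 : ℕ) •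
          ∑ j ∈ Finset.range (k + 1 + 1 - 1), (k + 1 + 1 - 1 - j) •
            (((-2 : ℝ) : ℍ[ℝ]) * (q ^ (k + 1 + 1 - 2 - j) * star q ^ j))) * (star p) ^ (k + 1 + 1)))
      = ∑' k : ℕ, -2 * (((k.factorial : ℝ)⁻¹) • (Q k q * (star p) ^ (k + 2))) :=
        tsum_congr fun k => Skey (star p) q k
    _ = (-2 : ℍ[ℝ]) * ∑' k : ℕ, ((k.factorial : ℝ)⁻¹) • (Q k q * (star p) ^ (k + 2)) :=
        tsum_mul_left


end
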